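/- If p(x) and q(y) are global types invariant over B, corresponding to coherent families of sections π^p, π^q : S_•(B) → S_•(B)∘[+1], then the composition S_•(B) → S_•(B)∘[+1] → S_•(B)∘[+2] given by π^q followed by the shift π^p[+1] corresponds to the product type p(x) ⊗ q(y), which is again a global type invariant over B. -/

import Mathlib

/-!
STATEMENT 10: If `p(x)` and `q(y)` are global types invariant over `B`, corresponding
to coherent families of sections `π^p, π^q : S_•(B) → S_•(B)∘[+1]`, then the
composition `S_•(B) → S_•(B)∘[+1] → S_•(B)∘[+2]` given by `π^q` followed by the shift
`π^p[+1]` corresponds to the product type `p(x) ⊗ q(y)` — the global `2`-type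
determined by: `φ(x,y,c̄) ∈ p ⊗ q` iff `φ(x,c,c̄) ∈ p` for some (any) `c` realizing
`q ↾ Bc̄` — which is again a global type invariant over `B`.
-/

open FirstOrder FirstOrder.Language
open FirstOrder FirstOrder.Language

namespace StoneSpace

variable (L : Language) (M : Type*) [L.Structure M]

/-- Two `n`-tuples of a structure have the same complete type over a parameter set `B`
iff they satisfy the same formulas with parameters in `B`. -/
def typEq (B : Set M) (n : ℕ) (a b : Fin n → M) : Prop :=
  ∀ φ : L.Formula (Fin n ⊕ ↥B),
    φ.Realize (Sum.elim a Subtype.val) ↔ φ.Realize (Sum.elim b Subtype.val)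

def typSetoid (B : Set M) (n : ℕ) : Setoid (Fin n → M) :=
  ⟨typEq L M B n,
    ⟨fun _ _ => Iff.rfl, fun h φ => (h φ).symm, fun h h' φ => (h φ).trans (h' φ)⟩⟩

/-- The Stone space of complete `n`-types over `B` (identified, in a monster model,
with the set of types of `n`-tuples of the model). -/
def S (B : Set M) (n : ℕ) : Type _ := Quotient (typSetoid L M B n)

/-- The complete type of the tuple `a` over `B`. -/
def tp (B : Set M) {n : ℕ} (a : Fin n → M) : S L M B n :=
  Quotient.mk (typSetoid L M B n) a

/-- The basic (cl)open subset of the type space determined by the formula `φ`;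
membership in it expresses `φ ∈ p`. -/
def fmlSet (B : Set M) {n : ℕ} (φ : L.Formula (Fin n ⊕ ↥B)) : Set (S L M B n) :=
  fun p => Quotient.lift (fun a => φ.Realize (Sum.elim a Subtype.val))
    (fun a b (h : typEq L M B n a b) => propext (h φ)) p

/-- The Stone topology on the space of `n`-types over `B`, generated by the sets `fmlSet φ`. -/
instance (B : Set M) (n : ℕ) : TopologicalSpace (S L M B n) :=
  TopologicalSpace.generateFrom (Set.range (fmlSet L M B (n := n)))

/-- The substitution (coordinate-permutation/projection) map between type spaces
induced by a map `s` of index sets. -/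
def subst (B : Set M) {m n : ℕ} (s : Fin m → Fin n) : S L M B n → S L M B m :=
  Quotient.map (fun a => a ∘ s)
    (by
      intro a b h ψ
      have := h (ψ.relabel (Sum.map s id))
      rwa [Formula.realize_relabel, Formula.realize_relabel,
        Sum.elim_comp_map, Sum.elim_comp_map, Function.comp_id] at this)

variable {L M}

/-- Formulas over `B` in `n + 1` free variables, with the tuple `c` of elements
substituted for the last `n` variables: the result is a formula over `M` in one free
variable, i.e., a candidate member of a global `1`-type. -/
def plug1 (B : Set M) {n : ℕ} (ψ : L.Formula (Fin (n + 1) ⊕ ↥B)) (c : Fin n → M) :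
    L.Formula (Fin 1 ⊕ M) :=
  ψ.relabel
    (Sum.elim (Fin.cases (Sum.inl 0) (fun j => Sum.inr (c j))) (fun b => Sum.inr b.val))

/-- Same for formulas in `n + 2` free variables: the first two variables remain free. -/
def plug2 (B : Set M) {n : ℕ} (ψ : L.Formula (Fin (n + 2) ⊕ ↥B)) (c : Fin n → M) :
    L.Formula (Fin 2 ⊕ M) :=
  ψ.relabel
    (Sum.elim
      (Fin.cases (Sum.inl 0) (Fin.cases (Sum.inl 1) (fun j => Sum.inr (c j))))
      (fun b => Sum.inr b.val))

/-- A complete global `k`-type over the model `M` (of the complete theory `Th(M)`): a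
finitely satisfiable and complete set of formulas in `k` free variables with parameters
everywhere in `M`. -/
def IsGlobalType (k : ℕ) (p : Set (L.Formula (Fin k ⊕ M))) : Prop :=
  (∀ fs : Finset (L.Formula (Fin k ⊕ M)), ↑fs ⊆ p →
      ∃ c : Fin k → M, ∀ φ ∈ fs, φ.Realize (Sum.elim c id)) ∧
    (∀ φ : L.Formula (Fin k ⊕ M), φ ∈ p ↔ φ.not ∉ p)

/-- A global `1`-type is invariant over `B` if membership of `φ(x, cc)` depends only on
the type of the parameter tuple `cc` over `B`. -/
def Invariant1 (B : Set M) (p : Set (L.Formula (Fin 1 ⊕ M))) : Prop :=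
  ∀ (n : ℕ) (ψ : L.Formula (Fin (n + 1) ⊕ ↥B)) (c c' : Fin n → M),
    typEq L M B n c c' → (plug1 B ψ c ∈ p ↔ plug1 B ψ c' ∈ p)

/-- `c` realizes the restriction of the global type `p` to `B ∪ (range cc)`. -/
def RealizesRes (B : Set M) (p : Set (L.Formula (Fin 1 ⊕ M))) {n : ℕ}
    (cc : Fin n → M) (c : M) : Prop :=
  ∀ ψ : L.Formula (Fin (n + 1) ⊕ ↥B),
    plug1 B ψ cc ∈ p → ψ.Realize (Sum.elim (Fin.cons c cc) Subtype.val)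

/-- The shift `s[+1]` of an index map, fixing the new first variable. -/
def shift {m n : ℕ} (s : Fin m → Fin n) : Fin (m + 1) → Fin (n + 1) :=
  Fin.cases 0 (fun i => (s i).succ)

variable (L M) in
/-- A family of maps `πₙ : Sₙ(B) → Sₙ₊₁(B)` is coherent if it commutes with all
substitution maps. -/
def Coherent (B : Set M) (π : ∀ n, S L M B n → S L M B (n + 1)) : Prop :=
  ∀ (m n : ℕ) (s : Fin m → Fin n) (r : S L M B n),
    π m (subst L M B s r) = subst L M B (shift s) (π n r)

variable (L M) in
/-- A family of sections of the projections `Sₙ₊₁(B) → Sₙ(B)` forgetting the first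
variable. -/
def IsSectionFamily (B : Set M) (π : ∀ n, S L M B n → S L M B (n + 1)) : Prop :=
  ∀ (n : ℕ) (r : S L M B n), subst L M B Fin.succ (π n r) = r

variable (L M) in
/-- The family `π` corresponds to the global type `p`:
`φ(x, ȳ) ∈ πₙ(tp(cc/B))` iff `φ(x, cc) ∈ p`. -/
def Corresponds (B : Set M) (p : Set (L.Formula (Fin 1 ⊕ M)))
    (π : ∀ n, S L M B n → S L M B (n + 1)) : Prop :=
  ∀ (n : ℕ) (cc : Fin n → M) (ψ : L.Formula (Fin (n + 1) ⊕ ↥B)),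
    π n (tp L M B cc) ∈ fmlSet L M B ψ ↔ plug1 B ψ cc ∈ p

end StoneSpace

namespace StoneSpace

variable {L : Language} {M : Type*} [L.Structure M]

/-- A global `2`-type is invariant over `B` if membership of `φ(x, y, c̄)` depends only
on the type of the parameter tuple `c̄` over `B`. -/
def Invariant2 (B : Set M) (q : Set (L.Formula (Fin 2 ⊕ M))) : Prop :=
  ∀ (n : ℕ) (ψ : L.Formula (Fin (n + 2) ⊕ ↥B)) (c c' : Fin n → M),
    typEq L M B n c c' → (plug2 B ψ c ∈ q ↔ plug2 B ψ c' ∈ q)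

/-- The pair `(c₁, c₂)` realizes the restriction of a global `2`-type `q` to
`B ∪ range c̄`. -/
def RealizesRes2 (B : Set M) (q : Set (L.Formula (Fin 2 ⊕ M))) {n : ℕ}
    (cc : Fin n → M) (c₁ c₂ : M) : Prop :=
  ∀ ψ : L.Formula (Fin (n + 2) ⊕ ↥B),
    plug2 B ψ cc ∈ q →
      ψ.Realize (Sum.elim (Fin.cons c₁ (Fin.cons c₂ cc)) Subtype.val)

/-- Formulas over `B` in `n + 3` free variables with the tuple `c` of parameters
substituted for the last `n` variables. -/
def plug3 (B : Set M) {n : ℕ} (ψ : L.Formula (Fin (n + 3) ⊕ ↥B)) (c : Fin n → M) :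
    L.Formula (Fin 3 ⊕ M) :=
  ψ.relabel
    (Sum.elim
      (Fin.cases (Sum.inl 0)
        (Fin.cases (Sum.inl 1) (Fin.cases (Sum.inl 2) (fun j => Sum.inr (c j)))))
      (fun b => Sum.inr b.val))

variable (L M) in
/-- A family of maps `Sₙ(B) → Sₙ₊₂(B)` corresponds to the global `2`-type `q`. -/
def Corresponds2 (B : Set M) (q : Set (L.Formula (Fin 2 ⊕ M)))
    (ρ : ∀ n, S L M B n → S L M B (n + 2)) : Prop :=
  ∀ (n : ℕ) (cc : Fin n → M) (ψ : L.Formula (Fin (n + 2) ⊕ ↥B)),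
    ρ n (tp L M B cc) ∈ fmlSet L M B ψ ↔ plug2 B ψ cc ∈ q

variable (L M) in
/-- A family of maps `Sₙ(B) → Sₙ₊₃(B)` corresponds to the global `3`-type `t`. -/
def Corresponds3 (B : Set M) (t : Set (L.Formula (Fin 3 ⊕ M)))
    (ρ : ∀ n, S L M B n → S L M B (n + 3)) : Prop :=
  ∀ (n : ℕ) (cc : Fin n → M) (ψ : L.Formula (Fin (n + 3) ⊕ ↥B)),
    ρ n (tp L M B cc) ∈ fmlSet L M B ψ ↔ plug3 B ψ cc ∈ t

/-- The swap of the two free variables of a global `2`-type's formula. -/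
def swapFml (φ : L.Formula (Fin 2 ⊕ M)) : L.Formula (Fin 2 ⊕ M) :=
  φ.relabel (Sum.map (Equiv.swap (0 : Fin 2) 1) id)

end StoneSpace

/-!
Fix `c ⊨ q ↾ Bc̄`. Two such realizations have the same type over `Bc̄`, since `q` is complete
and `B`-invariant; so by `B`-invariance of `p`, whether `φ(x, c, c̄) ∈ p` depends neither on
`c` nor, after realizing `q` over the union of two parameter tuples, on how `φ` is written
with parameters `c̄`. This defines `p ⊗ q`; it is finitely satisfiable because finitely many
formulas can be written over a common tuple `c̄` and `p` is. Finally, a realization of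
`π^q(tp(c̄))` is a tuple `(c, c̄')` with `c̄' ≡_B c̄` and `c ⊨ q ↾ Bc̄'`, so `π^p` applied to its
type computes `p ⊗ q` over `c̄'`, hence over `c̄` by invariance.
-/

namespace FirstOrder.Language

variable {L : Language} {α β γ : Type*}

theorem Term.relabel_sumMap_congr [DecidableEq α] {f g : α → β} {k : ℕ}
    (t : L.Term (α ⊕ Fin k)) (h : ∀ a ∈ t.varFinsetLeft, f a = g a) :
    t.relabel (Sum.map f id) = t.relabel (Sum.map g id) := by
  induction t with
  | var v => rcases v with a | i <;> simp_all [Term.varFinsetLeft]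
  | func F ts ih =>
    simp only [Term.varFinsetLeft, Finset.mem_biUnion, Finset.mem_univ, true_and] at h
    exact congrArg _ (funext fun i => ih i fun a ha => h a ⟨i, ha⟩)

namespace BoundedFormula

theorem relabel_sumInl_comp (g : α → β) {k : ℕ} (φ : L.BoundedFormula α k) :
    φ.relabel (Sum.inl ∘ g) =
      (φ.mapTermRel (fun _ => Term.relabel (Sum.map g id)) (fun _ => id) fun _ => id).castLE
        (zero_add k).ge := by
  have haux : ∀ k, relabelAux (Sum.inl ∘ g : α → β ⊕ Fin 0) k =
      Sum.map id (Fin.castLE (zero_add k).ge) ∘ Sum.map g id := by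
    intro k
    ext (a | i) <;> simp [relabelAux]
    rfl
  induction φ with
  | falsum => rfl
  | equal => simp [relabel, mapTermRel, castLE, Term.relabel_relabel, haux]
  | rel => simp only [relabel, mapTermRel, castLE, haux, ← Term.relabel_comp_relabel]; rfl
  | imp _ _ ih₁ ih₂ => rw [relabel_imp, ih₁, ih₂]; rfl
  | all _ ih => rw [relabel_all, ih]; rfl

theorem mapTermRel_relabel_sumMap_congr [DecidableEq α] {f g : α → β} {k : ℕ}
    (φ : L.BoundedFormula α k) (h : ∀ a ∈ φ.freeVarFinset, f a = g a) :
    φ.mapTermRel (fun _ => Term.relabel (Sum.map f id)) (fun _ => id) (fun _ => id) =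
      φ.mapTermRel (fun _ => Term.relabel (Sum.map g id)) (fun _ => id) (fun _ => id) := by
  induction φ with
  | falsum => rfl
  | equal t₁ t₂ =>
    simp only [freeVarFinset, Finset.mem_union] at h
    simp only [mapTermRel, Term.relabel_sumMap_congr t₁ fun a ha => h a (.inl ha),
      Term.relabel_sumMap_congr t₂ fun a ha => h a (.inr ha)]
  | rel R ts =>
    simp only [freeVarFinset, Finset.mem_biUnion, Finset.mem_univ, true_and] at h
    exact congrArg _ (funext fun i => Term.relabel_sumMap_congr (ts i) fun a ha => h a ⟨i, ha⟩)
  | imp _ _ ih₁ ih₂ => simp_all [mapTermRel]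
  | all _ ih => simp_all [mapTermRel]

end BoundedFormula

namespace Formula

open BoundedFormula

theorem relabel_eq_mapTermRel (g : α → β) (φ : L.Formula α) :
    φ.relabel g =
      φ.mapTermRel (fun _ => Term.relabel (Sum.map g id)) (fun _ => id) fun _ => id := by
  rw [Formula.relabel, relabel_sumInl_comp, castLE_rfl]

theorem relabel_relabel (f : α → β) (g : β → γ) (φ : L.Formula α) :
    (φ.relabel f).relabel g = φ.relabel (g ∘ f) := by
  simp only [relabel_eq_mapTermRel, mapTermRel_mapTermRel, Term.relabel_comp_relabel,
    Sum.map_comp_map, Function.comp_id]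

theorem relabel_id (φ : L.Formula α) : φ.relabel id = φ := by
  simp [relabel_eq_mapTermRel]

theorem relabel_congr [DecidableEq α] {f g : α → β} (φ : L.Formula α)
    (h : ∀ a ∈ φ.freeVarFinset, f a = g a) : φ.relabel f = φ.relabel g := by
  simp only [relabel_eq_mapTermRel, mapTermRel_relabel_sumMap_congr φ h]

end Formula

end FirstOrder.Language

theorem Fin.append_comp_castAdd {α : Type*} {m n : ℕ} (u : Fin m → α) (v : Fin n → α) :
    Fin.append u v ∘ Fin.castAdd n = u :=
  funext (Fin.append_left u v)

theorem Fin.append_comp_natAdd {α : Type*} {m n : ℕ} (u : Fin m → α) (v : Fin n → α) :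
    Fin.append u v ∘ Fin.natAdd m = v :=
  funext (Fin.append_right u v)

namespace StoneSpace

variable {L : Language} {M : Type*} {B : Set M}

theorem cons_comp_shift {α : Type*} {m n : ℕ} (s : Fin m → Fin n) (a : α) (v : Fin n → α) :
    Fin.cons a v ∘ shift s = Fin.cons a (v ∘ s) := by
  funext i
  cases i using Fin.cases <;> rfl

theorem plug1_not {n : ℕ} (ψ : L.Formula (Fin (n + 1) ⊕ ↥B)) (cc : Fin n → M) :
    plug1 B ψ.not cc = (plug1 B ψ cc).not :=
  BoundedFormula.relabel_not _ _

theorem plug2_not {n : ℕ} (ψ : L.Formula (Fin (n + 2) ⊕ ↥B)) (cc : Fin n → M) :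
    plug2 B ψ.not cc = (plug2 B ψ cc).not :=
  BoundedFormula.relabel_not _ _

theorem plug1_relabel_shift {m n : ℕ} (s : Fin m → Fin n) (ψ : L.Formula (Fin (m + 1) ⊕ ↥B))
    (cc : Fin n → M) :
    plug1 B (ψ.relabel (Sum.map (shift s) id)) cc = plug1 B ψ (cc ∘ s) := by
  simp only [plug1, Formula.relabel_relabel]
  congr 1
  ext (i | b)
  · cases i using Fin.cases <;> rfl
  · rfl

theorem plug2_relabel_shift_shift {m n : ℕ} (s : Fin m → Fin n)
    (ψ : L.Formula (Fin (m + 2) ⊕ ↥B)) (cc : Fin n → M) :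
    plug2 B (ψ.relabel (Sum.map (shift (shift s)) id)) cc = plug2 B ψ (cc ∘ s) := by
  simp only [plug2, Formula.relabel_relabel]
  congr 1
  ext (i | b)
  · cases i using Fin.cases with
    | zero => rfl
    | succ j => cases j using Fin.cases <;> rfl
  · rfl

def substSnd (φ : L.Formula (Fin 2 ⊕ M)) (c : M) : L.Formula (Fin 1 ⊕ M) :=
  φ.relabel (Sum.elim (Fin.cases (Sum.inl 0) fun _ => Sum.inr c) Sum.inr)

theorem substSnd_plug2 {n : ℕ} (ψ : L.Formula (Fin (n + 2) ⊕ ↥B)) (cc : Fin n → M) (c : M) :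
    substSnd (plug2 B ψ cc) c = plug1 B ψ (Fin.cons c cc) := by
  simp only [substSnd, plug2, plug1, Formula.relabel_relabel]
  congr 1
  ext (i | b)
  · cases i using Fin.cases with
    | zero => rfl
    | succ j => cases j using Fin.cases <;> rfl
  · rfl

theorem exists_plug2_eq (φ : L.Formula (Fin 2 ⊕ M)) :
    ∃ (n : ℕ) (ψ : L.Formula (Fin (n + 2) ⊕ ↥B)) (cc : Fin n → M), φ = plug2 B ψ cc := by
  classical
  let s : Finset M := φ.freeVarFinset.preimage Sum.inr Sum.inr_injective.injOn
  let e := s.equivFin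
  let u : Fin 2 ⊕ M → Fin (s.card + 2) ⊕ ↥B :=
    Sum.elim (fun i => Sum.inl (Fin.castLE (by omega) i))
      fun m => if h : m ∈ s then Sum.inl (e ⟨m, h⟩).succ.succ else Sum.inl 0
  refine ⟨s.card, φ.relabel u, fun i => e.symm i, ?_⟩
  rw [plug2, Formula.relabel_relabel, ← φ.relabel_congr, Formula.relabel_id]
  rintro (i | m) hfree
  · fin_cases i <;> rfl
  · have hm : m ∈ s := Finset.mem_preimage.mpr hfree
    simp [u, hm]

theorem exists_plug2_eq_of_finset (fs : Finset (L.Formula (Fin 2 ⊕ M))) :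
    ∃ (n : ℕ) (cc : Fin n → M),
      ∀ φ ∈ fs, ∃ ψ : L.Formula (Fin (n + 2) ⊕ ↥B), φ = plug2 B ψ cc := by
  classical
  induction fs using Finset.induction_on with
  | empty => exact ⟨0, Fin.elim0, by simp⟩
  | insert φ fs _ ih =>
    obtain ⟨n, cc, hfs⟩ := ih
    obtain ⟨n', ψ', cc', rfl⟩ := exists_plug2_eq (B := B) φ
    refine ⟨n' + n, Fin.append cc' cc, ?_⟩
    rintro χ hχ
    rcases Finset.mem_insert.mp hχ with rfl | hχ
    · refine ⟨ψ'.relabel (Sum.map (shift (shift (Fin.castAdd n))) id), ?_⟩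
      rw [plug2_relabel_shift_shift, Fin.append_comp_castAdd]
    · obtain ⟨ψ, rfl⟩ := hfs χ hχ
      refine ⟨ψ.relabel (Sum.map (shift (shift (Fin.natAdd n'))) id), ?_⟩
      rw [plug2_relabel_shift_shift, Fin.append_comp_natAdd]

variable [L.Structure M] {p q : Set (L.Formula (Fin 1 ⊕ M))}

theorem realize_substSnd (φ : L.Formula (Fin 2 ⊕ M)) (c : M) (v : Fin 1 → M) :
    (substSnd φ c).Realize (Sum.elim v id) ↔ φ.Realize (Sum.elim ![v 0, c] id) := by
  rw [substSnd, Formula.realize_relabel]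
  congr!
  ext (i | m)
  · fin_cases i <;> rfl
  · rfl

theorem IsGlobalType.mem_not_iff {k : ℕ} {t : Set (L.Formula (Fin k ⊕ M))}
    (ht : IsGlobalType k t) (φ : L.Formula (Fin k ⊕ M)) : φ.not ∈ t ↔ φ ∉ t := by
  rw [ht.2 φ, not_not]

theorem RealizesRes.comp {m n : ℕ} {cc : Fin n → M} {c : M} (h : RealizesRes B q cc c)
    (s : Fin m → Fin n) : RealizesRes B q (cc ∘ s) c := by
  intro ψ hψ
  have hrel := h (ψ.relabel (Sum.map (shift s) id)) (by rwa [plug1_relabel_shift])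
  rwa [Formula.realize_relabel, Sum.elim_comp_map, cons_comp_shift, Function.comp_id] at hrel

theorem typEq_cons_of_realizesRes (hq : IsGlobalType 1 q) (hqinv : Invariant1 B q) {n : ℕ}
    {cc cc' : Fin n → M} {c c' : M} (h : typEq L M B n cc cc')
    (hc : RealizesRes B q cc c) (hc' : RealizesRes B q cc' c') :
    typEq L M B (n + 1) (Fin.cons c cc) (Fin.cons c' cc') := by
  intro ψ
  by_cases hψ : plug1 B ψ cc ∈ q
  · exact iff_of_true (hc ψ hψ) (hc' ψ ((hqinv n ψ cc cc' h).mp hψ))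
  · have hnot : plug1 B ψ.not cc ∈ q := by rwa [plug1_not, hq.mem_not_iff]
    exact iff_of_false (hc ψ.not hnot) (hc' ψ.not ((hqinv n ψ.not cc cc' h).mp hnot))

theorem mem_iff_of_plug2_eq (hpinv : Invariant1 B p) (hq : IsGlobalType 1 q)
    (hqinv : Invariant1 B q) (hreal : ∀ (n : ℕ) (cc : Fin n → M), ∃ c : M, RealizesRes B q cc c)
    {n n' : ℕ} {ψ : L.Formula (Fin (n + 2) ⊕ ↥B)} {ψ' : L.Formula (Fin (n' + 2) ⊕ ↥B)}
    {cc : Fin n → M} {cc' : Fin n' → M} {c c' : M} (heq : plug2 B ψ cc = plug2 B ψ' cc')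
    (hc : RealizesRes B q cc c) (hc' : RealizesRes B q cc' c') :
    plug1 B ψ (Fin.cons c cc) ∈ p ↔ plug1 B ψ' (Fin.cons c' cc') ∈ p := by
  obtain ⟨d, hd⟩ := hreal (n + n') (Fin.append cc cc')
  have hdl : RealizesRes B q cc d := Fin.append_comp_castAdd cc cc' ▸ hd.comp (Fin.castAdd n')
  have hdr : RealizesRes B q cc' d := Fin.append_comp_natAdd cc cc' ▸ hd.comp (Fin.natAdd n)
  calc plug1 B ψ (Fin.cons c cc) ∈ p
      ↔ plug1 B ψ (Fin.cons d cc) ∈ p :=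
        hpinv _ ψ _ _ (typEq_cons_of_realizesRes hq hqinv (fun _ => Iff.rfl) hc hdl)
    _ ↔ plug1 B ψ' (Fin.cons d cc') ∈ p := by rw [← substSnd_plug2, ← substSnd_plug2, heq]
    _ ↔ plug1 B ψ' (Fin.cons c' cc') ∈ p :=
        hpinv _ ψ' _ _ (typEq_cons_of_realizesRes hq hqinv (fun _ => Iff.rfl) hdr hc')

variable (B p q) in
/-- `p ⊗ q` -/
def prodType : Set (L.Formula (Fin 2 ⊕ M)) :=
  {φ | ∃ (n : ℕ) (ψ : L.Formula (Fin (n + 2) ⊕ ↥B)) (cc : Fin n → M) (c : M),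
    RealizesRes B q cc c ∧ φ = plug2 B ψ cc ∧ plug1 B ψ (Fin.cons c cc) ∈ p}

theorem mem_prodType_iff (hpinv : Invariant1 B p) (hq : IsGlobalType 1 q)
    (hqinv : Invariant1 B q) (hreal : ∀ (n : ℕ) (cc : Fin n → M), ∃ c : M, RealizesRes B q cc c)
    {n : ℕ} (ψ : L.Formula (Fin (n + 2) ⊕ ↥B)) (cc : Fin n → M) {c : M}
    (hc : RealizesRes B q cc c) :
    plug2 B ψ cc ∈ prodType B p q ↔ plug1 B ψ (Fin.cons c cc) ∈ p := by
  constructor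
  · rintro ⟨n', ψ', cc', c', hc', heq, hmem⟩
    exact (mem_iff_of_plug2_eq hpinv hq hqinv hreal heq.symm hc' hc).mp hmem
  · exact fun hmem => ⟨n, ψ, cc, c, hc, rfl, hmem⟩

theorem invariant2_prodType (hpinv : Invariant1 B p) (hq : IsGlobalType 1 q)
    (hqinv : Invariant1 B q) (hreal : ∀ (n : ℕ) (cc : Fin n → M), ∃ c : M, RealizesRes B q cc c) :
    Invariant2 B (prodType B p q) := by
  intro n ψ cc cc' h
  obtain ⟨c, hc⟩ := hreal n cc
  obtain ⟨c', hc'⟩ := hreal n cc'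
  rw [mem_prodType_iff hpinv hq hqinv hreal ψ cc hc,
    mem_prodType_iff hpinv hq hqinv hreal ψ cc' hc']
  exact hpinv (n + 1) ψ _ _ (typEq_cons_of_realizesRes hq hqinv h hc hc')

theorem isGlobalType_prodType (hp : IsGlobalType 1 p) (hpinv : Invariant1 B p)
    (hq : IsGlobalType 1 q) (hqinv : Invariant1 B q)
    (hreal : ∀ (n : ℕ) (cc : Fin n → M), ∃ c : M, RealizesRes B q cc c) :
    IsGlobalType 2 (prodType B p q) := by
  constructor
  · intro fs hfs
    obtain ⟨n, cc, hrep⟩ := exists_plug2_eq_of_finset (B := B) fs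
    obtain ⟨c, hc⟩ := hreal n cc
    have hsubst : ∀ φ ∈ fs, substSnd φ c ∈ p := by
      intro φ hφ
      obtain ⟨ψ, rfl⟩ := hrep φ hφ
      rw [substSnd_plug2]
      exact (mem_prodType_iff hpinv hq hqinv hreal ψ cc hc).mp (hfs hφ)
    classical
    obtain ⟨a, ha⟩ := hp.1 (fs.image (substSnd · c)) (by simpa [Set.subset_def] using hsubst)
    exact ⟨![a 0, c], fun φ hφ =>
      (realize_substSnd φ c a).mp (ha _ (Finset.mem_image_of_mem _ hφ))⟩
  · intro φ
    obtain ⟨n, ψ, cc, rfl⟩ := exists_plug2_eq (B := B) φ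
    obtain ⟨c, hc⟩ := hreal n cc
    rw [← plug2_not, mem_prodType_iff hpinv hq hqinv hreal ψ cc hc,
      mem_prodType_iff hpinv hq hqinv hreal _ cc hc, plug1_not, hp.2]

theorem Corresponds.comp {πp πq : ∀ n, S L M B n → S L M B (n + 1)}
    {pq : Set (L.Formula (Fin 2 ⊕ M))}
    (hpcorr : Corresponds L M B p πp) (hqcorr : Corresponds L M B q πq)
    (hqsec : IsSectionFamily L M B πq) (hpqinv : Invariant2 B pq)
    (hpq : ∀ (n : ℕ) (ψ : L.Formula (Fin (n + 2) ⊕ ↥B)) (cc : Fin n → M) (c : M),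
      RealizesRes B q cc c → (plug2 B ψ cc ∈ pq ↔ plug1 B ψ (Fin.cons c cc) ∈ p)) :
    Corresponds2 L M B pq fun n r => πp (n + 1) (πq n r) := by
  intro n cc ψ
  obtain ⟨d, hd⟩ : ∃ d, tp L M B d = πq n (tp L M B cc) := Quotient.exists_rep _
  have htail : tp L M B (Fin.tail d) = tp L M B cc := by
    rw [← hqsec n (tp L M B cc), ← hd]
    rfl
  have hd0 : RealizesRes B q (Fin.tail d) (d 0) := by
    intro χ hχ
    have hmem := (hqcorr n _ χ).mpr hχ
    rw [htail, ← hd] at hmem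
    rwa [Fin.cons_self_tail]
  calc πp (n + 1) (πq n (tp L M B cc)) ∈ fmlSet L M B ψ
      ↔ plug1 B ψ d ∈ p := by rw [← hd]; exact hpcorr (n + 1) d ψ
    _ ↔ plug2 B ψ (Fin.tail d) ∈ pq := by rw [hpq n ψ _ _ hd0, Fin.cons_self_tail]
    _ ↔ plug2 B ψ cc ∈ pq := hpqinv n ψ _ _ (Quotient.exact htail)

end StoneSpace

open StoneSpace in
theorem product_of_invariant_types_corresponds_to_composition_general
    (L : Language) (M : Type*) [L.Structure M] (B : Set M)
    (p q : Set (L.Formula (Fin 1 ⊕ M)))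
    (hp : IsGlobalType 1 p) (hpinv : Invariant1 B p)
    (hq : IsGlobalType 1 q) (hqinv : Invariant1 B q)
    (πp πq : ∀ n, S L M B n → S L M B (n + 1))
    (hqsec : IsSectionFamily L M B πq)
    (hpcorr : Corresponds L M B p πp) (hqcorr : Corresponds L M B q πq)
    (hreal : ∀ (n : ℕ) (cc : Fin n → M), ∃ c : M, RealizesRes B q cc c) :
    ∃ pq : Set (L.Formula (Fin 2 ⊕ M)),
      IsGlobalType 2 pq ∧ Invariant2 B pq ∧
      (∀ (n : ℕ) (ψ : L.Formula (Fin (n + 2) ⊕ ↥B)) (cc : Fin n → M) (c : M),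
        RealizesRes B q cc c →
          (plug2 B ψ cc ∈ pq ↔ plug1 B ψ (Fin.cons c cc) ∈ p)) ∧
      Corresponds2 L M B pq (fun n r => πp (n + 1) (πq n r)) := by
  have hmem := fun n ψ cc c (hc : RealizesRes B q cc c) =>
    mem_prodType_iff (n := n) hpinv hq hqinv hreal ψ cc hc
  have hinv := invariant2_prodType hpinv hq hqinv hreal
  exact ⟨prodType B p q, isGlobalType_prodType hp hpinv hq hqinv hreal, hinv, hmem,
    hpcorr.comp hqcorr hqsec hinv hmem⟩

open StoneSpace in
theorem product_of_invariant_types_corresponds_to_composition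
    (L : Language) (M : Type*) [L.Structure M] (B : Set M)
    (p q : Set (L.Formula (Fin 1 ⊕ M)))
    (hp : IsGlobalType 1 p) (hpinv : Invariant1 B p)
    (hq : IsGlobalType 1 q) (hqinv : Invariant1 B q)
    (πp πq : ∀ n, S L M B n → S L M B (n + 1))
    (hpcoh : Coherent L M B πp) (hpsec : IsSectionFamily L M B πp)
    (hqcoh : Coherent L M B πq) (hqsec : IsSectionFamily L M B πq)
    (hpcorr : Corresponds L M B p πp) (hqcorr : Corresponds L M B q πq)
    (hreal : ∀ (n : ℕ) (cc : Fin n → M), ∃ c : M, RealizesRes B q cc c) :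
    ∃ pq : Set (L.Formula (Fin 2 ⊕ M)),
      IsGlobalType 2 pq ∧ Invariant2 B pq ∧
      (∀ (n : ℕ) (ψ : L.Formula (Fin (n + 2) ⊕ ↥B)) (cc : Fin n → M) (c : M),
        RealizesRes B q cc c →
          (plug2 B ψ cc ∈ pq ↔ plug1 B ψ (Fin.cons c cc) ∈ p)) ∧
      Corresponds2 L M B pq (fun n r => πp (n + 1) (πq n r)) :=
  product_of_invariant_types_corresponds_to_composition_general L M B p q hp hpinv hq hqinv πp πq
    hqsec hpcorr hqcorr hreal
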